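/- Let K ↷ A be a group action by automorphisms on a unital algebra A such that the fixed-point algebra A^K has trivial relative commutant: (A^K)' ∩ A = ℂ·1. Suppose u ∈ Aˣ is invertible with u A^K u⁻¹ ⊆ A^M for a subgroup M ≤ K. Then for every g ∈ M the element χ(g) := u⁻¹ α_g(u) is a scalar multiple of 1, and g ↦ χ(g) (viewed as scalar) is a group homomorphism M → ℂˣ. -/
import Mathlib


/-- Let `K` act on a unital algebra `A` with `(A^K)' ∩ A = ℂ·1`, and let
`u ∈ Aˣ` satisfy `u A^K u⁻¹ ⊆ A^M` for a subgroup `M ≤ K`. Then for every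
`g ∈ M` the element `u⁻¹ α_g(u)` is a scalar `χ(g)·1` and `g ↦ χ(g)` is a
group homomorphism `M → ℂˣ`. -/
theorem stmt_18 {K A : Type*} [Group K] [Ring A] [Algebra ℂ A] [Nontrivial A]
    (hinj : Function.Injective (algebraMap ℂ A))
    (α : K →* (A ≃ₐ[ℂ] A))
    (hcomm : ∀ a : A,
      (∀ b : A, (∀ g : K, α g b = b) → a * b = b * a) → ∃ c : ℂ, a = algebraMap ℂ A c)
    (M : Subgroup K) (u : Aˣ)
    (hu : ∀ a : A, (∀ g : K, α g a = a) → ∀ g ∈ M,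
      α g ((u : A) * a * ((u⁻¹ : Aˣ) : A)) = (u : A) * a * ((u⁻¹ : Aˣ) : A)) :
    ∃ χ : M → ℂˣ,
      (∀ g : M, ((u⁻¹ : Aˣ) : A) * α (g : K) (u : A) = algebraMap ℂ A ((χ g : ℂˣ) : ℂ)) ∧
      (∀ g h : M, χ (g * h) = χ g * χ h) := by
  -- step 1 : u⁻¹ α_g(u) is a scalar
  have key : ∀ g : M, ∃ c : ℂ, ((u⁻¹ : Aˣ) : A) * α (g : K) (u : A) = algebraMap ℂ A c := by
    intro g
    apply hcomm
    intro b hb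
    have h1 := hu b hb g g.2
    have h2 : α (g : K) ((u : A) * b * ((u⁻¹ : Aˣ) : A))
        = α (g : K) (u : A) * b * α (g : K) ((u⁻¹ : Aˣ) : A) := by
      simp [map_mul, hb]
    have e : α (g : K) (u : A) * b * α (g : K) ((u⁻¹ : Aˣ) : A)
        = (u : A) * b * ((u⁻¹ : Aˣ) : A) := by rw [← h2, h1]
    have hinv : α (g : K) ((u⁻¹ : Aˣ) : A) * α (g : K) (u : A) = 1 := by
      rw [← map_mul]; simp
    calc ((u⁻¹ : Aˣ) : A) * α (g : K) (u : A) * b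
        = ((u⁻¹ : Aˣ) : A) * (α (g : K) (u : A) * b * α (g : K) ((u⁻¹ : Aˣ) : A))
            * α (g : K) (u : A) := by
          rw [mul_assoc _ _ (α (g:K) (u:A)), mul_assoc _ _ (α (g:K) (u:A)), hinv, mul_one,
            mul_assoc]
      _ = ((u⁻¹ : Aˣ) : A) * ((u : A) * b * ((u⁻¹ : Aˣ) : A)) * α (g : K) (u : A) := by rw [e]
      _ = b * (((u⁻¹ : Aˣ) : A) * α (g : K) (u : A)) := by
          rw [← mul_assoc, ← mul_assoc, Units.inv_mul, one_mul, mul_assoc]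
  choose c hc using key
  -- each c g is nonzero
  have hne : ∀ g : M, c g ≠ 0 := by
    intro g h0
    have hv : IsUnit (((u⁻¹ : Aˣ) : A) * α (g : K) (u : A)) :=
      ((u⁻¹ : Aˣ).isUnit).mul (u.isUnit.map (α (g : K)))
    rw [hc g, h0, map_zero] at hv
    exact not_isUnit_zero hv
  refine ⟨fun g => Units.mk0 (c g) (hne g), fun g => hc g, ?_⟩
  intro g h
  ext
  apply hinj
  show algebraMap ℂ A (c (g * h)) = algebraMap ℂ A (c g * c h)
  rw [← hc (g * h), map_mul]
  have : (((g * h : M) : K)) = (g : K) * (h : K) := rfl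
  rw [this, map_mul α, AlgEquiv.mul_apply]
  calc ((u⁻¹ : Aˣ) : A) * α (g : K) (α (h : K) (u : A))
      = ((u⁻¹ : Aˣ) : A) * α (g : K) ((u : A) * (((u⁻¹ : Aˣ) : A) * α (h : K) (u : A))) := by
        rw [← mul_assoc, Units.mul_inv, one_mul]
    _ = ((u⁻¹ : Aˣ) : A) * α (g : K) (u : A) * α (g : K) (algebraMap ℂ A (c h)) := by
        rw [hc h, map_mul, mul_assoc]
    _ = algebraMap ℂ A (c g) * algebraMap ℂ A (c h) := by
        rw [hc g, AlgEquiv.commutes]
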